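/- arXiv:1412.6486 — 2 statements merged into one kernel-verified Lean document; each statement's English description precedes it below -/
import Mathlib

section
/- Under the hypotheses that u₁ is fixed with L₁(u₁) > 0, L₂(u₁) > 0, a₇ > 0, and 0 < u₂ < h(u₁) where h(u₁) = a₇/(log(√(L₂(u₁)/L₁(u₁))) - a₈) > 0, it holds that K₃(u₁, u₂) = L₁(u₁) - L₂(u₁)·exp(a₇/u₂ + a₈)^(-2) > 0. -/
open Real

theorem sub_div_exp_sq_pos_of_log_sqrt_lt {L₁ L₂ c : ℝ} (hL₁ : 0 < L₁) (hL₂ : 0 < L₂)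
    (h : log √(L₂ / L₁) < c) : 0 < L₁ - L₂ / exp c ^ 2 := by
  have hsqrt : √(L₂ / L₁) < exp c :=
    (log_lt_iff_lt_exp (sqrt_pos.mpr (div_pos hL₂ hL₁))).mp h
  have hratio : L₂ / L₁ < exp c ^ 2 := (sqrt_lt' (exp_pos c)).mp hsqrt
  rw [sub_pos, div_lt_iff₀ (by positivity)]
  rw [div_lt_iff₀ hL₁] at hratio
  linarith

theorem stmt_7_general (a₅ a₆ a₇ a₈ θc ε : ℝ) (u₁ u₂ : ℝ)
    (hL₁ : 0 < (a₅ - a₆ * u₁) / (1 + ε * u₁))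
    (hL₂ : 0 < ((θc + u₁) / (1 - u₁)) ^ 2)
    (hden : Real.log (Real.sqrt ((((θc + u₁) / (1 - u₁)) ^ 2) /
        ((a₅ - a₆ * u₁) / (1 + ε * u₁)))) - a₈ > 0)
    (hu₂0 : 0 < u₂)
    (hu₂h : u₂ < a₇ / (Real.log (Real.sqrt ((((θc + u₁) / (1 - u₁)) ^ 2) /
        ((a₅ - a₆ * u₁) / (1 + ε * u₁)))) - a₈)) :
    0 < (a₅ - a₆ * u₁) / (1 + ε * u₁) -
      ((θc + u₁) / (1 - u₁)) ^ 2 / (Real.exp (a₇ / u₂ + a₈)) ^ 2 := by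
  have hbelow := (lt_div_comm₀ hu₂0 hden).mp hu₂h
  exact sub_div_exp_sq_pos_of_log_sqrt_lt hL₁ hL₂ (by linarith)

/-- Below the steady-state curve (`0 < u₂ < h(u₁)`), `K₃(u₁,u₂) > 0`. -/
theorem stmt_7 (a₅ a₆ a₇ a₈ θc ε : ℝ) (u₁ u₂ : ℝ)
    (ha₇ : 0 < a₇)
    (hL₁ : 0 < (a₅ - a₆ * u₁) / (1 + ε * u₁))
    (hL₂ : 0 < ((θc + u₁) / (1 - u₁)) ^ 2)
    (hden : Real.log (Real.sqrt ((((θc + u₁) / (1 - u₁)) ^ 2) /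
        ((a₅ - a₆ * u₁) / (1 + ε * u₁)))) - a₈ > 0)
    (hu₂0 : 0 < u₂)
    (hu₂h : u₂ < a₇ / (Real.log (Real.sqrt ((((θc + u₁) / (1 - u₁)) ^ 2) /
        ((a₅ - a₆ * u₁) / (1 + ε * u₁)))) - a₈)) :
    0 < (a₅ - a₆ * u₁) / (1 + ε * u₁) -
      ((θc + u₁) / (1 - u₁)) ^ 2 / (Real.exp (a₇ / u₂ + a₈)) ^ 2 :=
  stmt_7_general a₅ a₆ a₇ a₈ θc ε u₁ u₂ hL₁ hL₂ hden hu₂0 hu₂h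
end

section
/- Under the hypotheses that u₁ is fixed with L₁(u₁) > 0, L₂(u₁) > 0, a₇ > 0, and u₂ > h(u₁) > 0 where h(u₁) = a₇/(log(√(L₂(u₁)/L₁(u₁))) - a₈), it holds that K₃(u₁, u₂) = L₁(u₁) - L₂(u₁)·exp(a₇/u₂ + a₈)^(-2) < 0. -/
open Real

lemma sub_div_exp_sq_neg_of_lt_log_sqrt {L₁ L₂ t : ℝ} (hL₁ : 0 < L₁) (hL₂ : 0 < L₂)
    (ht : t < log √(L₂ / L₁)) : L₁ - L₂ / exp t ^ 2 < 0 := by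
  have hexp : exp t < √(L₂ / L₁) := (lt_log_iff_exp_lt (by positivity)).mp ht
  have hexp_sq : exp t ^ 2 < L₂ / L₁ := (lt_sqrt (exp_pos t).le).mp hexp
  rw [sub_neg, lt_div_iff₀ (by positivity), mul_comm]
  exact (lt_div_iff₀ hL₁).mp hexp_sq

lemma div_lt_of_div_lt {a d u : ℝ} (ha : 0 < a) (hd : 0 < d) (hu : a / d < u) : a / u < d :=
  (div_lt_comm₀ (lt_trans (div_pos ha hd) hu) hd).mpr hu

/-- Above the steady-state curve (`u₂ > h(u₁) > 0`), `K₃(u₁,u₂) < 0`. -/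
theorem stmt_8 (a₅ a₆ a₇ a₈ θc ε : ℝ) (u₁ u₂ : ℝ)
    (ha₇ : 0 < a₇)
    (hL₁ : 0 < (a₅ - a₆ * u₁) / (1 + ε * u₁))
    (hL₂ : 0 < ((θc + u₁) / (1 - u₁)) ^ 2)
    (hden : Real.log (Real.sqrt ((((θc + u₁) / (1 - u₁)) ^ 2) /
        ((a₅ - a₆ * u₁) / (1 + ε * u₁)))) - a₈ > 0)
    (hu₂h : u₂ > a₇ / (Real.log (Real.sqrt ((((θc + u₁) / (1 - u₁)) ^ 2) /
        ((a₅ - a₆ * u₁) / (1 + ε * u₁)))) - a₈)) :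
    (a₅ - a₆ * u₁) / (1 + ε * u₁) -
      ((θc + u₁) / (1 - u₁)) ^ 2 / (Real.exp (a₇ / u₂ + a₈)) ^ 2 < 0 := by
  apply sub_div_exp_sq_neg_of_lt_log_sqrt hL₁ hL₂
  linarith [div_lt_of_div_lt ha₇ hden hu₂h]
end
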